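/- arXiv:2005.13608 — 2 statements merged into one kernel-verified Lean document; each statement's English description precedes it below -/
import Mathlib

section
/- For any two graphs G and H without isolated vertices, γ_tR(G × H) ≤ 2·γ_t(G)·γ_t(H), where G × H is the direct (tensor) product. -/
open Finset

/-- A total Roman dominating function: labels in {0,1,2}, every 0-labeled vertex has a
2-labeled neighbor, and positive-labeled vertices induce a subgraph with no isolated vertex. -/
def IsTRDF {V : Type*} (G : SimpleGraph V) (f : V → ℕ) : Prop :=
  (∀ v, f v ≤ 2) ∧
  (∀ v, f v = 0 → ∃ u, G.Adj v u ∧ f u = 2) ∧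
  (∀ v, 0 < f v → ∃ u, G.Adj v u ∧ 0 < f u)

/-- The total Roman domination number. -/
noncomputable def trdn {V : Type*} (G : SimpleGraph V) [Fintype V] : ℕ :=
  sInf {w | ∃ f : V → ℕ, IsTRDF G f ∧ ∑ v, f v = w}

/-- A total dominating set. -/
def IsTotalDomSet {V : Type*} (G : SimpleGraph V) (D : Set V) : Prop :=
  ∀ v, ∃ u ∈ D, G.Adj v u

/-- The total domination number. -/
noncomputable def tdn {V : Type*} (G : SimpleGraph V) [Fintype V] : ℕ :=
  sInf {n | ∃ D : Finset V, IsTotalDomSet G ↑D ∧ D.card = n}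

/-- A packing: pairwise disjoint closed neighborhoods. -/
def IsPacking {V : Type*} (G : SimpleGraph V) (S : Set V) : Prop :=
  ∀ u ∈ S, ∀ v ∈ S, u ≠ v →
    Disjoint (insert u (G.neighborSet u)) (insert v (G.neighborSet v))

/-- The packing number. -/
noncomputable def packingNumber {V : Type*} (G : SimpleGraph V) [Fintype V] : ℕ :=
  sSup {n | ∃ S : Finset V, IsPacking G ↑S ∧ S.card = n}

/-- An open packing: pairwise disjoint open neighborhoods. -/
def IsOpenPacking {V : Type*} (G : SimpleGraph V) (S : Set V) : Prop :=
  ∀ u ∈ S, ∀ v ∈ S, u ≠ v → Disjoint (G.neighborSet u) (G.neighborSet v)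

/-- The open packing number. -/
noncomputable def openPackingNumber {V : Type*} (G : SimpleGraph V) [Fintype V] : ℕ :=
  sSup {n | ∃ S : Finset V, IsOpenPacking G ↑S ∧ S.card = n}

/-- The direct (tensor) product of two simple graphs. -/
def dirProd {V W : Type*} (G : SimpleGraph V) (H : SimpleGraph W) : SimpleGraph (V × W) where
  Adj p q := G.Adj p.1 q.1 ∧ H.Adj p.2 q.2
  symm := ⟨fun p q h => ⟨h.1.symm, h.2.symm⟩⟩
  loopless := ⟨fun p h => G.loopless.irrefl p.1 h.1⟩

/-- A graph with no isolated vertices. -/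
def NoIsolated {V : Type*} (G : SimpleGraph V) : Prop := ∀ v, ∃ u, G.Adj v u

/-! The product `D_G ×ˢ D_H` of minimum total dominating sets totally dominates `G × H`, and
labelling it with `2` and everything else with `0` is a total Roman dominating function. -/

lemma NoIsolated.isTotalDomSet_univ {V : Type*} {G : SimpleGraph V} (hG : NoIsolated G) :
    IsTotalDomSet G Set.univ :=
  fun v => (hG v).imp fun u h => ⟨Set.mem_univ u, h⟩

lemma NoIsolated.exists_isTotalDomSet_card_eq_tdn {V : Type*} [Fintype V]
    {G : SimpleGraph V} (hG : NoIsolated G) :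
    ∃ D : Finset V, IsTotalDomSet G ↑D ∧ D.card = tdn G :=
  Nat.sInf_mem (s := {n | ∃ D : Finset V, IsTotalDomSet G ↑D ∧ D.card = n})
    ⟨_, Finset.univ, by simpa only [Finset.coe_univ] using hG.isTotalDomSet_univ, rfl⟩

lemma IsTotalDomSet.dirProd {V W : Type*} {G : SimpleGraph V} {H : SimpleGraph W}
    {DG : Set V} {DH : Set W} (hDG : IsTotalDomSet G DG) (hDH : IsTotalDomSet H DH) :
    IsTotalDomSet (dirProd G H) (DG ×ˢ DH) := fun p => by
  obtain ⟨u, hu, hpu⟩ := hDG p.1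
  obtain ⟨x, hx, hpx⟩ := hDH p.2
  exact ⟨(u, x), ⟨hu, hx⟩, hpu, hpx⟩

lemma IsTotalDomSet.isTRDF_ite {V : Type*} {G : SimpleGraph V} {D : Set V}
    [DecidablePred (· ∈ D)] (hD : IsTotalDomSet G D) :
    IsTRDF G fun v => if v ∈ D then 2 else 0 := by
  have hdom : ∀ v, ∃ u, G.Adj v u ∧ (if u ∈ D then 2 else 0) = 2 := fun v => by
    obtain ⟨u, hu, hvu⟩ := hD v
    exact ⟨u, hvu, if_pos hu⟩
  refine ⟨fun v => ?_, fun v _ => hdom v, fun v _ => ?_⟩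
  · dsimp only
    split <;> omega
  · obtain ⟨u, hvu, hu⟩ := hdom v
    exact ⟨u, hvu, by dsimp only; omega⟩

lemma trdn_le_sum_of_isTRDF {V : Type*} [Fintype V] {G : SimpleGraph V} {f : V → ℕ}
    (hf : IsTRDF G f) : trdn G ≤ ∑ v, f v :=
  Nat.sInf_le ⟨f, hf, rfl⟩

lemma IsTotalDomSet.trdn_le_two_mul_card {V : Type*} [Fintype V] {G : SimpleGraph V}
    {D : Finset V} (hD : IsTotalDomSet G ↑D) : trdn G ≤ 2 * D.card := by
  classical
  calc trdn G ≤ ∑ v, if v ∈ D then 2 else 0 := trdn_le_sum_of_isTRDF hD.isTRDF_ite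
    _ = 2 * D.card := by
      rw [Finset.sum_ite_mem, Finset.univ_inter, Finset.sum_const, smul_eq_mul, mul_comm]

theorem stmt_5 {V W : Type*} [Fintype V] [Fintype W]
    (G : SimpleGraph V) (H : SimpleGraph W)
    (hG : NoIsolated G) (hH : NoIsolated H) :
    trdn (dirProd G H) ≤ 2 * tdn G * tdn H := by
  obtain ⟨DG, hDG, hcardG⟩ := hG.exists_isTotalDomSet_card_eq_tdn
  obtain ⟨DH, hDH, hcardH⟩ := hH.exists_isTotalDomSet_card_eq_tdn
  have hD : IsTotalDomSet (dirProd G H) ↑(DG ×ˢ DH) := by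
    rw [Finset.coe_product]
    exact hDG.dirProd hDH
  calc trdn (dirProd G H) ≤ 2 * (DG ×ˢ DH).card := hD.trdn_le_two_mul_card
    _ = 2 * tdn G * tdn H := by rw [Finset.card_product, hcardG, hcardH, mul_assoc]
end

section
/- There are no graphs G and H without isolated vertices such that γ_tR(G × H) ∈ {1, 2, 3, 5}. -/
open Finset

/-!
In `G × H` an edge `p ~ q` spans a square with the two "cross" vertices `(p.1, q.2)` and
`(q.1, p.2)`: these are distinct from `p`, `q` and from each other, and each shares a coordinate
with both `p` and `q`, so neither is adjacent to `p` or `q`. A zero-labelled cross vertex therefore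
needs a `2`-neighbour outside `{p, q}`; applied to an edge of positive vertices this gives weight
at least `4`. In weight `5` the same observation, used on the few positive vertices there are,
shows that no vertex can be labelled `0`. Such a function weighs at least `|V| * |W|`, the weight
of the constant function `1`, which is itself total Roman dominating; so a minimum one of weight
`5` forces `|V| * |W| = 5`, impossible as both factors are at least `2`.
-/

lemma sum_map_le_sum_univ_of_nodup {α : Type*} [Fintype α] (f : α → ℕ) {l : List α}
    (hl : l.Nodup) : (l.map f).sum ≤ ∑ v, f v := by
  classical
  rw [← List.sum_toFinset f hl]
  exact Finset.sum_le_sum_of_subset (Finset.subset_univ _)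

lemma mem_of_sum_univ_le_sum_map {α : Type*} [Fintype α] {f : α → ℕ} {l : List α}
    (hl : l.Nodup) (hsum : ∑ v, f v ≤ (l.map f).sum) {v : α} (hv : 0 < f v) : v ∈ l := by
  by_contra hvl
  have := sum_map_le_sum_univ_of_nodup f (List.nodup_cons.2 ⟨hvl, hl⟩)
  simp only [List.map_cons, List.sum_cons] at this
  omega

section TRDF

variable {V : Type*} {G : SimpleGraph V} {f : V → ℕ}

lemma NoIsolated.isTRDF_one (hG : NoIsolated G) : IsTRDF G fun _ => 1 :=
  ⟨fun _ => by norm_num, fun _ h => absurd h one_ne_zero,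
    fun v _ => (hG v).imp fun _ h => ⟨h, one_pos⟩⟩

lemma exists_isTRDF_sum_eq_trdn [Fintype V] (hG : NoIsolated G) :
    ∃ f : V → ℕ, IsTRDF G f ∧ ∑ v, f v = trdn G :=
  Nat.sInf_mem (s := {w | ∃ f : V → ℕ, IsTRDF G f ∧ ∑ v, f v = w})
    ⟨_, fun _ => 1, hG.isTRDF_one, rfl⟩

lemma trdn_le_card [Fintype V] (hG : NoIsolated G) : trdn G ≤ Fintype.card V :=
  Nat.sInf_le ⟨_, hG.isTRDF_one, by simp⟩

lemma IsTRDF.pos_of_forall_two_not_adj (hf : IsTRDF G f) {v : V}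
    (h : ∀ w, f w = 2 → ¬ G.Adj v w) : 0 < f v := by
  by_contra! hv
  obtain ⟨w, hvw, hw⟩ := hf.2.1 v (by omega)
  exact h w hw hvw

lemma IsTRDF.exists_adj_pos (hf : IsTRDF G f) (v : V) :
    ∃ p q, G.Adj p q ∧ 0 < f p ∧ 0 < f q := by
  by_cases hv : 0 < f v
  · obtain ⟨u, hvu, hu⟩ := hf.2.2 v hv
    exact ⟨v, u, hvu, hv, hu⟩
  · obtain ⟨u, -, hu⟩ := hf.2.1 v (by omega)
    obtain ⟨w, huw, hw⟩ := hf.2.2 u (by omega)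
    exact ⟨u, w, huw, by omega, hw⟩

end TRDF

section DirProd

variable {V W : Type*} {G : SimpleGraph V} {H : SimpleGraph W} {f : V × W → ℕ}
  {p q r : V × W}

lemma NoIsolated.dirProd (hG : NoIsolated G) (hH : NoIsolated H) :
    NoIsolated (dirProd G H) := fun v => by
  obtain ⟨g, hg⟩ := hG v.1
  obtain ⟨h, hh⟩ := hH v.2
  exact ⟨(g, h), hg, hh⟩

lemma dirProd_nodup_square (hpq : (dirProd G H).Adj p q) :
    [p, q, (p.1, q.2), (q.1, p.2)].Nodup := by
  simp [Prod.ext_iff, hpq.1.ne, hpq.2.ne, hpq.1.ne', hpq.2.ne']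

lemma IsTRDF.exists_two_ne_of_cross_eq_zero (hf : IsTRDF (dirProd G H) f)
    (h : f (p.1, q.2) = 0 ∨ f (q.1, p.2) = 0) : ∃ s, f s = 2 ∧ s ≠ p ∧ s ≠ q := by
  rcases h with h | h <;> obtain ⟨s, hxs, hs⟩ := hf.2.1 _ h
  · exact ⟨s, hs, ne_of_apply_ne Prod.fst hxs.1.ne', ne_of_apply_ne Prod.snd hxs.2.ne'⟩
  · exact ⟨s, hs, ne_of_apply_ne Prod.snd hxs.2.ne', ne_of_apply_ne Prod.fst hxs.1.ne'⟩

lemma IsTRDF.four_le_sum [Fintype V] [Fintype W] [Nonempty (V × W)]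
    (hf : IsTRDF (dirProd G H) f) : 4 ≤ ∑ v, f v := by
  obtain ⟨p, q, hpq, hp, hq⟩ := hf.exists_adj_pos (Classical.arbitrary _)
  by_cases hcross : f (p.1, q.2) = 0 ∨ f (q.1, p.2) = 0
  · obtain ⟨s, hs, hsp, hsq⟩ := hf.exists_two_ne_of_cross_eq_zero hcross
    have := sum_map_le_sum_univ_of_nodup f (l := [p, q, s])
      (by simp [hpq.ne, hsp.symm, hsq.symm])
    simp only [List.map_cons, List.map_nil, List.sum_cons, List.sum_nil] at this
    omega
  · have := sum_map_le_sum_univ_of_nodup f (dirProd_nodup_square hpq)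
    simp only [List.map_cons, List.map_nil, List.sum_cons, List.sum_nil] at this
    omega

lemma IsTRDF.adj_of_cross_eq_zero (hf : IsTRDF (dirProd G H) f)
    (hsupp : ∀ v, 0 < f v → v = p ∨ v = q ∨ v = r) (h : f (p.1, q.2) = 0) :
    (dirProd G H).Adj (p.1, q.2) r ∧ f r = 2 := by
  obtain ⟨s, hxs, hs⟩ := hf.2.1 _ h
  rcases hsupp s (by omega) with rfl | rfl | rfl
  · exact absurd rfl hxs.1.ne
  · exact absurd rfl hxs.2.ne
  · exact ⟨hxs, hs⟩

lemma IsTRDF.eq_two_of_adj_of_support_subset (hf : IsTRDF (dirProd G H) f)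
    (hsupp : ∀ v, 0 < f v → v = p ∨ v = q ∨ v = r) (hpq : (dirProd G H).Adj p q) :
    f r = 2 := by
  by_cases hx : f (p.1, q.2) = 0
  · exact (hf.adj_of_cross_eq_zero hsupp hx).2
  by_cases hy : f (q.1, p.2) = 0
  · exact (hf.adj_of_cross_eq_zero (fun v hv => or_left_comm.1 (hsupp v hv)) hy).2
  have hsq := dirProd_nodup_square hpq
  have hxr := hsupp _ (Nat.pos_of_ne_zero hx)
  have hyr := hsupp _ (Nat.pos_of_ne_zero hy)
  simp only [List.nodup_cons, List.mem_cons, List.not_mem_nil] at hsq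
  grind

lemma IsTRDF.eq_two_of_support_subset_of_pos (hf : IsTRDF (dirProd G H) f)
    (hsupp : ∀ v, 0 < f v → v = p ∨ v = q ∨ v = r) (hpq : (dirProd G H).Adj p q)
    (hr : 0 < f r) : f q = 2 := by
  have of_adj_r : (dirProd G H).Adj p r → f q = 2 := fun hpr =>
    hf.eq_two_of_adj_of_support_subset (fun v hv => by have := hsupp v hv; tauto) hpr
  obtain ⟨w, hrw, hw⟩ := hf.2.2 r hr
  rcases hsupp w hw with h | h | h <;> rw [h] at hrw
  · exact of_adj_r hrw.symm
  · -- as `r ~ q`, no cross vertex of `p ~ q` is `r`; both are then zero and dominated by `r`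
    have hx : f (p.1, q.2) = 0 := by
      by_contra hx
      rcases hsupp _ (Nat.pos_of_ne_zero hx) with h | h | h <;> simp only [Prod.ext_iff] at h
      exacts [hpq.2.ne' h.2, hpq.1.ne h.1, hrw.2.ne' h.2]
    have hy : f (q.1, p.2) = 0 := by
      by_contra hy
      rcases hsupp _ (Nat.pos_of_ne_zero hy) with h | h | h <;> simp only [Prod.ext_iff] at h
      exacts [hpq.1.ne' h.1, hpq.2.ne h.2, hrw.1.ne' h.1]
    exact of_adj_r ⟨(hf.adj_of_cross_eq_zero hsupp hx).1.1,
      (hf.adj_of_cross_eq_zero (fun v hv => or_left_comm.1 (hsupp v hv)) hy).1.2⟩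
  · exact absurd hrw ((dirProd G H).loopless.irrefl _)

lemma IsTRDF.pos_of_support_subset_square (hf : IsTRDF (dirProd G H) f)
    (hpq : (dirProd G H).Adj p q) (hq : 0 < f q)
    (hsupp : ∀ v, 0 < f v → v = p ∨ v = q ∨ v = (p.1, q.2) ∨ v = (q.1, p.2))
    (htwo : ∀ w, f w = 2 → w = p) (z : V × W) : 0 < f z := by
  by_contra! hz
  obtain ⟨w, hzp, hw⟩ := hf.2.1 z (by omega)
  obtain rfl := htwo w hw
  have hrow : 0 < f (z.1, w.2) := hf.pos_of_forall_two_not_adj fun v hv h => by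
    rw [htwo v hv] at h
    exact H.loopless.irrefl _ h.2
  have hcol : 0 < f (w.1, z.2) := hf.pos_of_forall_two_not_adj fun v hv h => by
    rw [htwo v hv] at h
    exact G.loopless.irrefl _ h.1
  have h1 : z.1 = q.1 := by
    rcases hsupp _ hrow with h | h | h | h <;> simp only [Prod.ext_iff] at h
    exacts [absurd h.1 hzp.1.ne, absurd h.2 hpq.2.ne, absurd h.1 hzp.1.ne, h.1]
  have h2 : z.2 = q.2 := by
    rcases hsupp _ hcol with h | h | h | h <;> simp only [Prod.ext_iff] at h
    exacts [absurd h.2 hzp.2.ne, absurd h.1 hpq.1.ne, h.2, absurd h.2 hzp.2.ne]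
  rw [show z = q from Prod.ext h1 h2] at hz
  omega

lemma IsTRDF.pos_of_sum_eq_five [Fintype V] [Fintype W] (hf : IsTRDF (dirProd G H) f)
    (h5 : ∑ v, f v = 5) (z : V × W) : 0 < f z := by
  by_contra! hz
  obtain ⟨u, -, hu⟩ := hf.2.1 z (by omega)
  obtain ⟨t, hut, ht⟩ := hf.2.2 u (by omega)
  by_cases hcross : f (u.1, t.2) = 0 ∨ f (t.1, u.2) = 0
  · obtain ⟨s, hs, hsu, hst⟩ := hf.exists_two_ne_of_cross_eq_zero hcross
    have hnodup : [u, t, s].Nodup := by simp [hut.ne, hsu.symm, hst.symm]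
    have hle := sum_map_le_sum_univ_of_nodup f hnodup
    simp only [List.map_cons, List.map_nil, List.sum_cons, List.sum_nil] at hle
    have hsupp : ∀ v, 0 < f v → v = u ∨ v = t ∨ v = s := fun v hv => by
      simpa using mem_of_sum_univ_le_sum_map hnodup
        (by simp only [List.map_cons, List.map_nil, List.sum_cons, List.sum_nil]; omega) hv
    have := hf.eq_two_of_support_subset_of_pos hsupp hut (by omega)
    omega
  · push Not at hcross
    have hnodup := dirProd_nodup_square hut
    have hle := sum_map_le_sum_univ_of_nodup f hnodup
    simp only [List.map_cons, List.map_nil, List.sum_cons, List.sum_nil] at hle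
    have hsupp : ∀ v, 0 < f v → v = u ∨ v = t ∨ v = (u.1, t.2) ∨ v = (t.1, u.2) :=
      fun v hv => by
        simpa using mem_of_sum_univ_le_sum_map hnodup
          (by simp only [List.map_cons, List.map_nil, List.sum_cons, List.sum_nil]; omega) hv
    have htwo : ∀ w, f w = 2 → w = u := fun w hw => by
      rcases hsupp w (by omega) with h | h | h | h
      · exact h
      all_goals rw [h] at hw; omega
    have := hf.pos_of_support_subset_square hut ht hsupp htwo z
    omega

end DirProd

theorem stmt_12 {V W : Type*} [Fintype V] [Fintype W]
    (G : SimpleGraph V) (H : SimpleGraph W)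
    (hG : NoIsolated G) (hH : NoIsolated H) :
    trdn (dirProd G H) ∉ ({1, 2, 3, 5} : Set ℕ) := by
  intro hmem
  simp only [Set.mem_insert_iff, Set.mem_singleton_iff] at hmem
  obtain ⟨f, hf, hsum⟩ := exists_isTRDF_sum_eq_trdn (hG.dirProd hH)
  obtain ⟨v, -, hv⟩ := Finset.exists_ne_zero_of_sum_ne_zero (s := Finset.univ) (f := f)
    (by omega)
  have : Nonempty (V × W) := ⟨v⟩
  have h4 := hf.four_le_sum
  have h5 : ∑ v, f v = 5 := by omega
  have hcard : Fintype.card V * Fintype.card W = 5 := by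
    rw [← Fintype.card_prod]
    refine le_antisymm ?_ (h5 ▸ hsum ▸ trdn_le_card (hG.dirProd hH))
    simpa [h5] using Finset.card_nsmul_le_sum Finset.univ f 1 fun z _ => hf.pos_of_sum_eq_five h5 z
  have hV : 1 < Fintype.card V := Fintype.one_lt_card_iff.2 ⟨_, _, (hG v.1).choose_spec.ne⟩
  have hW : 1 < Fintype.card W := Fintype.one_lt_card_iff.2 ⟨_, _, (hH v.2).choose_spec.ne⟩
  have := Nat.prime_mul_iff.1 (hcard ▸ Nat.prime_five)
  omega
end
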